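/- arXiv:2107.00539 — 4 statements merged into one kernel-verified Lean document; each statement's English description precedes it below -/
import Mathlib

section
/- For every a > 0, (∫_{|y| > a} |(f ⋆ π)(y)|² dy)^{1/2} ≤ (∫_{|u| > a/2} |f(u)|² du)^{1/2} + ‖f‖_{L²(ℝ)} · ∫_{|x| > a/2} π(x) dx. -/
/-!
For `|y| > a` split the convolution integral at `|x| = a / 2`. Where `|x| ≤ a / 2` we have
`|y - x| > a / 2`, so only the tail of `f` enters; where `|x| > a / 2` only the tail mass of `p`
does. Each piece is then bounded by the `L² × L¹` Young inequality `‖g ⋆ q‖₂ ≤ ‖g‖₂ ‖q‖₁`, which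
follows from Cauchy–Schwarz against the weight `q` and Tonelli. Working with lower Lebesgue
integrals of `|f|` and `p` avoids all integrability side conditions.
-/

open MeasureTheory Real Set

open scoped ENNReal

theorem ENNReal.sq_lintegral_mul_le {α : Type*} [MeasurableSpace α] {ν : Measure α}
    {F q : α → ℝ≥0∞} (hF : AEMeasurable F ν) (hq : AEMeasurable q ν) :
    (∫⁻ x, F x * q x ∂ν) ^ 2 ≤ (∫⁻ x, q x ∂ν) * ∫⁻ x, F x ^ 2 * q x ∂ν := by
  have hsqrt : ∀ x, q x ^ (1 / 2 : ℝ) * q x ^ (1 / 2 : ℝ) = q x := fun x => by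
    rw [← ENNReal.rpow_add_of_nonneg _ _ (by norm_num) (by norm_num)]; norm_num
  have hCS := ENNReal.lintegral_mul_le_Lp_mul_Lq ν Real.HolderConjugate.two_two
    (hF.mul (hq.pow_const (1 / 2 : ℝ))) (hq.pow_const (1 / 2 : ℝ))
  simp only [Pi.mul_apply, mul_assoc, hsqrt, ENNReal.mul_rpow_of_nonneg _ _ zero_le_two,
    ← ENNReal.rpow_mul] at hCS
  norm_num at hCS
  calc (∫⁻ x, F x * q x ∂ν) ^ 2
      ≤ ((∫⁻ x, F x ^ 2 * q x ∂ν) ^ (1 / 2 : ℝ) * (∫⁻ x, q x ∂ν) ^ (1 / 2 : ℝ)) ^ 2 := by gcongr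
    _ = (∫⁻ x, q x ∂ν) * ∫⁻ x, F x ^ 2 * q x ∂ν := by
        rw [mul_pow, ← ENNReal.rpow_natCast, ← ENNReal.rpow_natCast, ← ENNReal.rpow_mul,
          ← ENNReal.rpow_mul]
        norm_num [mul_comm]

theorem sq_eLpNorm_two_eq_lintegral {α ε : Type*} [MeasurableSpace α] [ENorm ε]
    {μ : Measure α} (f : α → ε) :
    eLpNorm f 2 μ ^ 2 = ∫⁻ x, ‖f x‖ₑ ^ 2 ∂μ := by
  simpa using eLpNorm_nnreal_pow_eq_lintegral (f := f) (μ := μ) (p := 2) two_ne_zero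

theorem sqrt_integral_sq_eq_toReal_eLpNorm {α : Type*} [MeasurableSpace α] {μ : Measure α}
    {g : α → ℝ} (hg : AEStronglyMeasurable g μ) :
    √(∫ x, g x ^ 2 ∂μ) = (eLpNorm g 2 μ).toReal := by
  rw [toReal_eLpNorm hg, lpNorm_eq_integral_norm_rpow_toReal two_ne_zero ENNReal.ofNat_ne_top hg,
    Real.sqrt_eq_rpow]
  simp

theorem lintegral_eq_setLIntegral_compl_indicator_add {α : Type*} [MeasurableSpace α] [Sub α]
    {μ : Measure α} {T : Set α} (hT : MeasurableSet T) {y : α} (hy : ∀ x ∉ T, y - x ∈ T)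
    (F q : α → ℝ≥0∞) :
    ∫⁻ x, F (y - x) * q x ∂μ
      = ∫⁻ x in Tᶜ, T.indicator F (y - x) * q x ∂μ + ∫⁻ x in T, F (y - x) * q x ∂μ := by
  rw [← lintegral_add_compl _ hT, add_comm]
  congr 1
  refine setLIntegral_congr_fun hT.compl fun x hx => ?_
  rw [indicator_of_mem (hy x hx)]

section Translates

variable {G : Type*} [MeasurableSpace G] [AddGroup G] [MeasurableAdd₂ G] [MeasurableNeg G]
  {μ ν : Measure G} [SFinite μ] [SFinite ν] [μ.IsAddRightInvariant]

theorem eLpNorm_lintegral_sub_mul_le {F q : G → ℝ≥0∞} (hF : Measurable F) (hq : Measurable q) :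
    eLpNorm (fun y => ∫⁻ x, F (y - x) * q x ∂ν) 2 μ ≤ eLpNorm F 2 μ * ∫⁻ x, q x ∂ν := by
  set Q := ∫⁻ x, q x ∂ν
  have hF2 : Measurable fun z : G × G => F (z.1 - z.2) ^ 2 * q z.2 := by fun_prop
  rw [← ENNReal.pow_le_pow_left_iff two_ne_zero]
  calc eLpNorm (fun y => ∫⁻ x, F (y - x) * q x ∂ν) 2 μ ^ 2
      = ∫⁻ y, (∫⁻ x, F (y - x) * q x ∂ν) ^ 2 ∂μ := by
        simp only [sq_eLpNorm_two_eq_lintegral, enorm_eq_self]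
    _ ≤ ∫⁻ y, Q * ∫⁻ x, F (y - x) ^ 2 * q x ∂ν ∂μ :=
        lintegral_mono fun y => ENNReal.sq_lintegral_mul_le (by fun_prop) hq.aemeasurable
    _ = Q * ∫⁻ x, (∫⁻ y, F (y - x) ^ 2 ∂μ) * q x ∂ν := by
        rw [lintegral_const_mul _ hF2.lintegral_prod_right',
          lintegral_lintegral_swap hF2.aemeasurable]
        congr 1
        refine lintegral_congr fun x => ?_
        exact lintegral_mul_const (q x) (by fun_prop : Measurable fun y => F (y - x) ^ 2)
    _ = (eLpNorm F 2 μ * Q) ^ 2 := by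
        rw [mul_pow, sq_eLpNorm_two_eq_lintegral]
        simp only [lintegral_sub_right_eq_self (fun u => F u ^ 2), lintegral_const_mul _ hq,
          enorm_eq_self]
        ring

theorem enorm_integral_sub_mul_le_lintegral {f g p : G → ℝ} (hfg : f =ᵐ[μ] g)
    (hp : ∀ x, 0 ≤ p x) (y : G) :
    ‖∫ x, f (y - x) * p x ∂μ‖ₑ ≤ ∫⁻ x, ‖g (y - x)‖ₑ * ENNReal.ofReal (p x) ∂μ := by
  have hshift : (fun x => f (y - x)) =ᵐ[μ] fun x => g (y - x) :=
    (quasiMeasurePreserving_sub_left_of_right_invariant μ y).ae_eq_comp hfg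
  refine (enorm_integral_le_lintegral_enorm _).trans_eq (lintegral_congr_ae ?_)
  filter_upwards [hshift] with x hx
  rw [enorm_mul, hx, Real.enorm_of_nonneg (hp x)]

end Translates

theorem half_lt_abs_sub {a x y : ℝ} (hy : a < |y|) (hx : |x| ≤ a / 2) : a / 2 < |y - x| := by
  linarith [abs_sub_abs_le_abs_sub y x]

theorem eLpNorm_convolution_tail_le {f p : ℝ → ℝ} (hf : AEStronglyMeasurable f)
    (hp : Measurable p) (hp0 : ∀ x, 0 ≤ p x) (hp1 : ∫⁻ x, ENNReal.ofReal (p x) = 1) (a : ℝ) :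
    eLpNorm (fun y => ∫ x, f (y - x) * p x) 2 (volume.restrict {y | a < |y|})
      ≤ eLpNorm f 2 (volume.restrict {u | a / 2 < |u|})
        + eLpNorm f 2 volume * ∫⁻ x in {x | a / 2 < |x|}, ENNReal.ofReal (p x) := by
  set T := {x : ℝ | a / 2 < |x|}
  have hT : MeasurableSet T := measurableSet_lt measurable_const measurable_abs
  set F : ℝ → ℝ≥0∞ := fun u => ‖hf.mk f u‖ₑ
  have hF : Measurable F := hf.stronglyMeasurable_mk.measurable.enorm
  set q : ℝ → ℝ≥0∞ := fun x => ENNReal.ofReal (p x)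
  have hq : Measurable q := hp.ennreal_ofReal
  set Φ₁ : ℝ → ℝ≥0∞ := fun y => ∫⁻ x in Tᶜ, T.indicator F (y - x) * q x
  set Φ₂ : ℝ → ℝ≥0∞ := fun y => ∫⁻ x in T, F (y - x) * q x
  have hΦ₁ : Measurable Φ₁ :=
    (((hF.indicator hT).comp measurable_sub).mul (hq.comp measurable_snd)).lintegral_prod_right'
  have hΦ₂ : Measurable Φ₂ :=
    ((hF.comp measurable_sub).mul (hq.comp measurable_snd)).lintegral_prod_right'
  have hsplit : ∀ᵐ y ∂volume.restrict {y | a < |y|},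
      ‖∫ x, f (y - x) * p x‖ₑ ≤ ‖(Φ₁ + Φ₂) y‖ₑ := by
    refine ae_restrict_of_forall_mem (measurableSet_lt measurable_const measurable_abs)
      fun y hy => ?_
    rw [enorm_eq_self, Pi.add_apply, ← lintegral_eq_setLIntegral_compl_indicator_add hT
      fun x hx => half_lt_abs_sub hy (not_lt.mp hx)]
    exact enorm_integral_sub_mul_le_lintegral hf.ae_eq_mk hp0 y
  calc eLpNorm (fun y => ∫ x, f (y - x) * p x) 2 (volume.restrict {y | a < |y|})
      ≤ eLpNorm (Φ₁ + Φ₂) 2 (volume.restrict {y | a < |y|}) := eLpNorm_mono_enorm_ae hsplit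
    _ ≤ eLpNorm Φ₁ 2 volume + eLpNorm Φ₂ 2 volume :=
        (eLpNorm_add_le hΦ₁.aestronglyMeasurable hΦ₂.aestronglyMeasurable one_le_two).trans
          (add_le_add (eLpNorm_mono_measure _ Measure.restrict_le_self)
            (eLpNorm_mono_measure _ Measure.restrict_le_self))
    _ ≤ eLpNorm (T.indicator F) 2 volume * (∫⁻ x in Tᶜ, q x)
          + eLpNorm F 2 volume * ∫⁻ x in T, q x :=
        add_le_add (eLpNorm_lintegral_sub_mul_le (hF.indicator hT) hq)
          (eLpNorm_lintegral_sub_mul_le hF hq)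
    _ ≤ eLpNorm f 2 (volume.restrict T) + eLpNorm f 2 volume * ∫⁻ x in T, q x := by
        have hTc : ∫⁻ x in Tᶜ, q x ≤ 1 := hp1 ▸ setLIntegral_le_lintegral _ _
        rw [eLpNorm_indicator_eq_eLpNorm_restrict hT, eLpNorm_enorm, eLpNorm_enorm,
          eLpNorm_congr_ae (ae_restrict_of_ae hf.ae_eq_mk.symm), eLpNorm_congr_ae hf.ae_eq_mk.symm]
        exact add_le_add (mul_le_of_le_one_right zero_le hTc) le_rfl

theorem convolution_tail_L2_bound_general
    (f : ℝ → ℝ) (hf2 : MemLp f 2 volume)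
    (p : ℝ → ℝ) (hpmeas : Measurable p) (hpnonneg : ∀ x, 0 ≤ p x)
    (hpint : ∫ x, p x = 1) :
    ∀ a : ℝ, 0 < a →
      Real.sqrt (∫ y in {y : ℝ | a < |y|}, (∫ x, f (y - x) * p x) ^ 2)
        ≤ Real.sqrt (∫ u in {u : ℝ | a / 2 < |u|}, (f u) ^ 2)
          + Real.sqrt (∫ y, (f y) ^ 2) * ∫ x in {x : ℝ | a / 2 < |x|}, p x := by
  intro a _
  have hp1 : ∫⁻ x, ENNReal.ofReal (p x) = 1 := by
    rw [← ofReal_integral_eq_lintegral_ofReal (.of_integral_ne_zero (by simp [hpint]))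
      (.of_forall hpnonneg), hpint, ENNReal.ofReal_one]
  have hε : ∫⁻ x in {x : ℝ | a / 2 < |x|}, ENNReal.ofReal (p x) ≠ ⊤ :=
    ne_top_of_le_ne_top ENNReal.one_ne_top (hp1 ▸ setLIntegral_le_lintegral _ _)
  have hconv : AEStronglyMeasurable (fun y => ∫ x, f (y - x) * p x) :=
    ((hf2.1.comp_quasiMeasurePreserving (quasiMeasurePreserving_sub_of_right_invariant _ _)).mul
      (hpmeas.comp measurable_snd).aestronglyMeasurable).integral_prod_right'
  have hA := (hf2.restrict {u | a / 2 < |u|}).eLpNorm_ne_top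
  have hB := ENNReal.mul_ne_top hf2.eLpNorm_ne_top hε
  rw [sqrt_integral_sq_eq_toReal_eLpNorm hconv.restrict,
    sqrt_integral_sq_eq_toReal_eLpNorm hf2.1.restrict, sqrt_integral_sq_eq_toReal_eLpNorm hf2.1,
    integral_eq_lintegral_of_nonneg_ae (.of_forall hpnonneg) hpmeas.aestronglyMeasurable,
    ← ENNReal.toReal_mul, ← ENNReal.toReal_add hA hB]
  exact ENNReal.toReal_mono (ENNReal.add_ne_top.2 ⟨hA, hB⟩)
    (eLpNorm_convolution_tail_le hf2.1 hpmeas hpnonneg hp1 a)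

theorem convolution_tail_L2_bound
    (f : ℝ → ℝ) (hf1 : Integrable f) (hf2 : MemLp f 2 volume)
    (p : ℝ → ℝ) (hpmeas : Measurable p) (hpnonneg : ∀ x, 0 ≤ p x)
    (hpint : ∫ x, p x = 1) :
    ∀ a : ℝ, 0 < a →
      Real.sqrt (∫ y in {y : ℝ | a < |y|}, (∫ x, f (y - x) * p x) ^ 2)
        ≤ Real.sqrt (∫ u in {u : ℝ | a / 2 < |u|}, (f u) ^ 2)
          + Real.sqrt (∫ y, (f y) ^ 2) * ∫ x in {x : ℝ | a / 2 < |x|}, p x :=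
  convolution_tail_L2_bound_general f hf2 p hpmeas hpnonneg hpint
end

section
/- For every natural number k, Σ_{j=0}^{k} binom(2k, 2j) · (2j − 1)!! · (2(k − j) − 1)!! = (2k)! / k!, where (2j−1)!! denotes the double factorial (with (−1)!! = 1). -/
open Finset Nat

/-! Multiplying the sum by `2 ^ k * k !` and using `(2 n)! = 2 ^ n * n ! * (2 n - 1)‼` turns the
`j`-th term into `choose k j * (2 k)!`, so the sum becomes `2 ^ k * (2 k)!` by the binomial
theorem. -/

theorem factorial_two_mul_eq_pow_mul_factorial_mul_doubleFactorial (n : ℕ) :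
    (2 * n)! = 2 ^ n * n ! * (2 * n - 1)‼ := by
  cases n with
  | zero => rfl
  | succ n =>
    rw [show 2 * (n + 1) = 2 * n + 1 + 1 by ring, factorial_eq_mul_doubleFactorial,
      show 2 * n + 1 + 1 = 2 * (n + 1) by ring, doubleFactorial_two_mul]
    rfl

theorem choose_two_mul_mul_doubleFactorial_mul_pow_mul_factorial {j k : ℕ} (hj : j ≤ k) :
    choose (2 * k) (2 * j) * (2 * j - 1)‼ * (2 * (k - j) - 1)‼ * (2 ^ k * k !)
      = choose k j * (2 * k)! := by
  rw [← choose_mul_factorial_mul_factorial hj,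
    ← choose_mul_factorial_mul_factorial (by omega : 2 * j ≤ 2 * k),
    show 2 * k - 2 * j = 2 * (k - j) by omega,
    factorial_two_mul_eq_pow_mul_factorial_mul_doubleFactorial j,
    factorial_two_mul_eq_pow_mul_factorial_mul_doubleFactorial (k - j),
    show 2 ^ k = 2 ^ j * 2 ^ (k - j) by rw [← pow_add, Nat.add_sub_cancel' hj]]
  ring

theorem doubleFactorial_binomial_sum (k : ℕ) :
    ∑ j ∈ Finset.range (k + 1),
        Nat.choose (2 * k) (2 * j) * Nat.doubleFactorial (2 * j - 1)
          * Nat.doubleFactorial (2 * (k - j) - 1)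
      = (2 * k).factorial / k.factorial := by
  have hpos : 0 < 2 ^ k * k ! := by positivity
  apply Nat.eq_of_mul_eq_mul_right hpos
  calc (∑ j ∈ range (k + 1),
          choose (2 * k) (2 * j) * (2 * j - 1)‼ * (2 * (k - j) - 1)‼) * (2 ^ k * k !)
      = ∑ j ∈ range (k + 1), choose k j * (2 * k)! := by
        rw [sum_mul]
        exact sum_congr rfl fun j hj => choose_two_mul_mul_doubleFactorial_mul_pow_mul_factorial
          (Nat.lt_succ_iff.mp (mem_range.mp hj))
    _ = 2 ^ k * (2 * k)! := by rw [← sum_mul, sum_range_choose]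
    _ = (2 * k)! / k ! * (2 ^ k * k !) := by
        rw [mul_left_comm, Nat.div_mul_cancel (factorial_dvd_factorial (by omega))]
end

section
/- For every y ∈ ℝ and every h > 0, |∫_ℝ K(x) f(y + x h) dx − f(y)| ≤ (h^m / m!) · ‖f^{(m)}‖_∞ · ∫_ℝ |x|^m |K(x)| dx. -/
/-!
Expand `f (y + x h)` to order `m` around `y`. Integrated against `K`, the Taylor polynomial
returns exactly `f y`, because `K` has total mass one and vanishing moments of orders
`1, …, m - 1`; the Lagrange remainder is at most `‖f⁽ᵐ⁾‖_∞ |x h|ᵐ / m!` pointwise, and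
integrating that bound against `|K|` gives the estimate.
-/

open MeasureTheory Real Finset Nat

theorem iteratedDerivWithin_eq_iteratedDeriv_of_differentiable {𝕜 F : Type*}
    [NontriviallyNormedField 𝕜] [NormedAddCommGroup F] [NormedSpace 𝕜 F]
    {f : 𝕜 → F} {m : ℕ} (hfd : ∀ i < m, Differentiable 𝕜 (iteratedDeriv i f))
    {s : Set 𝕜} (hs : UniqueDiffOn 𝕜 s) {k : ℕ} (hk : k ≤ m) {x : 𝕜} (hx : x ∈ s) :
    iteratedDerivWithin k f s x = iteratedDeriv k f x := by
  induction k generalizing x with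
  | zero => simp
  | succ k ih =>
    rw [iteratedDerivWithin_succ, iteratedDeriv_succ,
      derivWithin_congr (fun z hz => ih (by omega) hz) (ih (by omega) hx)]
    exact (hfd k (by omega)).differentiableAt.derivWithin (hs x hx)

theorem abs_sub_taylor_le {f : ℝ → ℝ} {m : ℕ}
    (hfd : ∀ i < m, Differentiable ℝ (iteratedDeriv i f)) {M : ℝ}
    (hM : ∀ y, |iteratedDeriv m f y| ≤ M) (a t : ℝ) :
    |f t - ∑ k ∈ range m, iteratedDeriv k f a / k ! * (t - a) ^ k|
      ≤ M * |t - a| ^ m / m ! := by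
  obtain _ | n := m
  · simpa using hM t
  obtain rfl | hat := eq_or_ne a t
  · simp [sum_range_succ']
  have hderiv {k : ℕ} (hk : k ≤ n + 1) {x : ℝ} (hx : x ∈ Set.uIcc a t) :
      iteratedDerivWithin k f (Set.uIcc a t) x = iteratedDeriv k f x :=
    iteratedDerivWithin_eq_iteratedDeriv_of_differentiable hfd (uniqueDiffOn_uIcc hat) hk hx
  have hf : ContDiff ℝ n f := contDiff_nat_iff_iteratedDeriv.2
    ⟨fun i hi => (hfd i (by omega)).continuous, fun i hi => hfd i (by omega)⟩
  have hf' : DifferentiableOn ℝ (iteratedDerivWithin n f (Set.uIcc a t)) (Set.uIoo a t) :=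
    (hfd n (by omega)).differentiableOn.congr
      fun x hx => hderiv (by omega) (Set.uIoo_subset_uIcc_self hx)
  obtain ⟨ξ, hξ, hrem⟩ := taylor_mean_remainder_lagrange hat hf.contDiffOn hf'
  have htaylor : taylorWithinEval f n (Set.uIcc a t) a t
      = ∑ k ∈ range (n + 1), iteratedDeriv k f a / k ! * (t - a) ^ k := by
    rw [taylor_within_apply]
    refine sum_congr rfl fun k hk => ?_
    rw [hderiv (by simp at hk; omega) Set.left_mem_uIcc, smul_eq_mul]
    ring
  rw [← htaylor, hrem, hderiv le_rfl (Set.uIoo_subset_uIcc_self hξ), abs_div, abs_mul, abs_pow,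
    Nat.abs_cast]
  gcongr
  exact hM ξ

section Moments

variable {μ : Measure ℝ} {K : ℝ → ℝ} {m : ℕ}

theorem integrable_pow_mul_of_integrable_abs_pow_mul (hK : Integrable K μ)
    (hKm : Integrable (fun x => |x| ^ m * |K x|) μ) {k : ℕ} (hk : k ≤ m) :
    Integrable (fun x => x ^ k * K x) μ := by
  refine (hK.abs.add hKm).mono' ((continuous_pow k).aestronglyMeasurable.mul hK.1)
    (ae_of_all _ fun x => ?_)
  have hpow : |x| ^ k ≤ 1 + |x| ^ m := by
    rcases le_total |x| 1 with hx | hx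
    · linarith [pow_le_one₀ (abs_nonneg x) hx (n := k), pow_nonneg (abs_nonneg x) m]
    · linarith [pow_le_pow_right₀ hx hk]
  rw [norm_mul, norm_pow, Real.norm_eq_abs, Real.norm_eq_abs, Pi.add_apply]
  nlinarith [abs_nonneg (K x)]

theorem mul_sum_pow_eq (c : ℕ → ℝ) (x : ℝ) :
    K x * ∑ k ∈ range m, c k * x ^ k = ∑ k ∈ range m, c k * (x ^ k * K x) := by
  rw [mul_sum]
  exact sum_congr rfl fun k _ => by ring

theorem integrable_mul_sum_pow (hint : ∀ k < m, Integrable (fun x => x ^ k * K x) μ)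
    (c : ℕ → ℝ) : Integrable (fun x => K x * ∑ k ∈ range m, c k * x ^ k) μ := by
  simp_rw [mul_sum_pow_eq]
  exact integrable_finsetSum _ fun k hk => (hint k (mem_range.1 hk)).const_mul _

theorem integral_mul_sum_pow_eq (hm : 1 ≤ m)
    (hint : ∀ k < m, Integrable (fun x => x ^ k * K x) μ) (hK0 : ∫ x, K x ∂μ = 1)
    (hKj : ∀ j, 1 ≤ j → j ≤ m - 1 → ∫ x, x ^ j * K x ∂μ = 0) (c : ℕ → ℝ) :
    ∫ x, K x * ∑ k ∈ range m, c k * x ^ k ∂μ = c 0 := by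
  simp_rw [mul_sum_pow_eq]
  rw [integral_finsetSum _ fun k hk => (hint k (mem_range.1 hk)).const_mul _,
    sum_eq_single_of_mem 0 (mem_range.2 hm)]
  · simp [integral_const_mul, hK0]
  · intro k hk hk0
    rw [integral_const_mul, hKj k (by omega) (by simp at hk; omega), mul_zero]

end Moments

theorem norm_integral_sub_le_of_norm_sub_le {α E : Type*} [MeasurableSpace α] {μ : Measure α}
    [NormedAddCommGroup E] [NormedSpace ℝ E] {f g : α → E} {b : α → ℝ}
    (hf : AEStronglyMeasurable f μ) (hg : Integrable g μ) (hb : Integrable b μ)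
    (h : ∀ᵐ x ∂μ, ‖f x - g x‖ ≤ b x) :
    ‖∫ x, f x ∂μ - ∫ x, g x ∂μ‖ ≤ ∫ x, b x ∂μ := by
  have hfg : Integrable (f - g) μ := hb.mono' (hf.sub hg.1) h
  have hf' : Integrable f μ := by simpa using hfg.add hg
  rw [← integral_sub hf' hg]
  exact norm_integral_le_of_norm_le hb h

theorem kernel_bias_bound
    (m : ℕ) (hm : 1 ≤ m)
    (K : ℝ → ℝ) (hK : Integrable K)
    (hK0 : ∫ x, K x = 1)
    (hKj : ∀ j, 1 ≤ j → j ≤ m - 1 → ∫ x, x ^ j * K x = 0)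
    (hKm : Integrable (fun x => |x| ^ m * |K x|))
    (f : ℝ → ℝ)
    (hfd : ∀ i < m, Differentiable ℝ (iteratedDeriv i f))
    (M : ℝ) (hM : ∀ y, |iteratedDeriv m f y| ≤ M) :
    ∀ y : ℝ, ∀ h : ℝ, 0 < h →
      |(∫ x, K x * f (y + x * h)) - f y|
        ≤ h ^ m / (m.factorial : ℝ) * M * ∫ x, |x| ^ m * |K x| := by
  intro y h hh
  set c : ℕ → ℝ := fun k => iteratedDeriv k f y / k ! * h ^ k
  have hint k (hk : k < m) := integrable_pow_mul_of_integrable_abs_pow_mul hK hKm hk.le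
  have hpoly : ∫ x, K x * ∑ k ∈ range m, c k * x ^ k = f y := by
    simpa [c] using integral_mul_sum_pow_eq hm hint hK0 hKj c
  have hremainder (x : ℝ) : |f (y + x * h) - ∑ k ∈ range m, c k * x ^ k|
      ≤ h ^ m / m ! * M * |x| ^ m := by
    have := abs_sub_taylor_le hfd hM y (y + x * h)
    simp_rw [add_sub_cancel_left, mul_pow, abs_mul, abs_of_pos hh] at this
    convert this using 3
    · exact sum_congr rfl fun k _ => by ring
    · ring
  have hf : Continuous f := by simpa using (hfd 0 (by omega)).continuous
  rw [← hpoly, ← Real.norm_eq_abs, ← integral_const_mul]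
  refine norm_integral_sub_le_of_norm_sub_le
    (hK.1.mul (hf.comp (by fun_prop)).aestronglyMeasurable)
    (integrable_mul_sum_pow hint c) (hKm.const_mul _) (ae_of_all _ fun x => ?_)
  rw [← mul_sub, norm_mul, Real.norm_eq_abs, Real.norm_eq_abs]
  calc |K x| * |f (y + x * h) - _| ≤ |K x| * (h ^ m / m ! * M * |x| ^ m) := by
        gcongr; exact hremainder x
    _ = _ := by ring
end

section
/- Assume additionally a_k ≥ 0 for 1 ≤ k ≤ J₁. Then for every U ≥ 1 and every y with |y| ≤ U, π(y) ≥ 2 δ₀ exp(−ᾱ₁ U^{2J₁}), where δ₀ = (2 Z_π)^{−1} exp(−α₀ − Σ_{J₁ < j ≤ J} |α_j| − ‖β‖_∞), ᾱ₁ = Σ_{j=1}^{J₁} α_j, and α₀ = Σ_{k=1}^{J₁} m_{2k} a_k. -/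
/-!
The fixed-point equation gives `π(y) = Z⁻¹ exp (-(φ ⋆ π)(y))`, so it suffices to bound `(φ ⋆ π)(y)`
from above. As `π` is even, its odd moments and its sine transform vanish, so expanding
`(y - s)^{2j}` binomially and `cos (θ (y - s))` by the addition formula gives
`(φ ⋆ π)(y) = α₀ + Σ_{j ≤ J₁} α_j y^{2j} + Σ_{j > J₁} α_j cos (θ_j y) + (β ⋆ π)(y)`.
Since `a_k ≥ 0` and even moments are nonnegative, `α_j ≥ 0` for `j ≤ J₁`, hence for `|y| ≤ U`,
`U ≥ 1`, the right-hand side is at most `α₀ + ᾱ₁ U^{2J₁} + Σ_{j > J₁} |α_j| + ‖β‖_∞`.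
-/

open MeasureTheory Real Finset

lemma integral_eq_zero_of_odd {G E : Type*} [MeasurableSpace G] [AddGroup G] [MeasurableNeg G]
    [NormedAddCommGroup E] [NormedSpace ℝ E] {μ : Measure G} [μ.IsNegInvariant] {f : G → E}
    (hf : f.Odd) : ∫ x, f x ∂μ = 0 := by
  have : IsAddTorsionFree E := .of_isTorsionFree ℝ E
  have h := integral_neg_eq_self f μ
  simp only [hf.eq, integral_neg] at h
  exact neg_eq_self.1 h

lemma sum_range_two_mul_add_one_of_odd_eq_zero {M : Type*} [AddCommMonoid M] {f : ℕ → M}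
    (hf : ∀ i, Odd i → f i = 0) (n : ℕ) :
    ∑ i ∈ range (2 * n + 1), f i = ∑ i ∈ range (n + 1), f (2 * i) := by
  induction n with
  | zero => simp
  | succ n ih =>
    rw [show 2 * (n + 1) + 1 = 2 * n + 1 + 1 + 1 by ring, sum_range_succ, sum_range_succ, ih,
      hf _ (odd_two_mul_add_one n), add_zero, sum_range_succ _ (n + 1)]
    rfl

lemma sum_Icc_one_sum_range_succ {M : Type*} [AddCommMonoid M] (f : ℕ → ℕ → M) (n : ℕ) :
    ∑ j ∈ Icc 1 n, ∑ l ∈ range (j + 1), f j l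
      = ∑ j ∈ Icc 1 n, f j 0 + ∑ l ∈ Icc 1 n, ∑ j ∈ Icc l n, f j l := by
  have hrange (j : ℕ) : range (j + 1) = insert 0 (Icc 1 j) := by
    ext; simp only [mem_range, mem_insert, mem_Icc]; omega
  simp_rw [hrange, sum_insert (show 0 ∉ Icc 1 _ by simp), sum_add_distrib]
  exact congrArg _ (sum_comm' fun j l => by simp only [mem_Icc]; omega)

lemma mul_cos_le_abs (c x : ℝ) : c * cos x ≤ |c| :=
  (le_abs_self _).trans <| by
    rw [abs_mul]; exact mul_le_of_le_one_right (abs_nonneg c) (abs_cos_le_one x)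

lemma sum_mul_pow_two_mul_le {α : ℕ → ℝ} {n : ℕ} (hα : ∀ l ∈ Icc 1 n, 0 ≤ α l) {U y : ℝ}
    (hU : 1 ≤ U) (hy : |y| ≤ U) :
    ∑ l ∈ Icc 1 n, α l * y ^ (2 * l) ≤ (∑ l ∈ Icc 1 n, α l) * U ^ (2 * n) := by
  rw [sum_mul]
  refine sum_le_sum fun l hl => mul_le_mul_of_nonneg_left ?_ (hα l hl)
  calc y ^ (2 * l) = |y| ^ (2 * l) := ((even_two_mul l).pow_abs y).symm
    _ ≤ U ^ (2 * l) := pow_le_pow_left₀ (abs_nonneg y) hy _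
    _ ≤ U ^ (2 * n) := pow_le_pow_right₀ hU (by simp only [mem_Icc] at hl; omega)

section Weight

variable {X : Type*} [MeasurableSpace X] {μ : Measure X} {p : X → ℝ}

lemma integrable_sum_mul_mul {ι : Type*} {s : Finset ι} (a : ι → ℝ) {f : ι → X → ℝ}
    (hf : ∀ i ∈ s, Integrable (fun x => f i x * p x) μ) :
    Integrable (fun x => (∑ i ∈ s, a i * f i x) * p x) μ := by
  simp_rw [sum_mul, mul_assoc]
  exact integrable_finsetSum _ fun i hi => (hf i hi).const_mul (a i)

lemma integral_sum_mul_mul {ι : Type*} {s : Finset ι} (a : ι → ℝ) {f : ι → X → ℝ}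
    (hf : ∀ i ∈ s, Integrable (fun x => f i x * p x) μ) :
    ∫ x, (∑ i ∈ s, a i * f i x) * p x ∂μ = ∑ i ∈ s, a i * ∫ x, f i x * p x ∂μ := by
  simp_rw [sum_mul, mul_assoc]
  rw [integral_finsetSum _ fun i hi => (hf i hi).const_mul (a i)]
  simp_rw [integral_const_mul]

lemma integral_mul_le_of_abs_le (hp0 : ∀ x, 0 ≤ p x) (hp1 : ∫ x, p x ∂μ = 1) {f : X → ℝ}
    (hf : AEStronglyMeasurable f μ) {B : ℝ} (hB : ∀ x, |f x| ≤ B) : ∫ x, f x * p x ∂μ ≤ B := by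
  have hp : Integrable p μ := .of_integral_ne_zero (by simp [hp1])
  calc ∫ x, f x * p x ∂μ ≤ ∫ x, B * p x ∂μ :=
        integral_mono (hp.bdd_mul hf (ae_of_all _ hB)) (hp.const_mul B) fun x =>
          mul_le_mul_of_nonneg_right ((le_abs_self _).trans (hB x)) (hp0 x)
    _ = B := by rw [integral_const_mul, hp1, mul_one]

lemma MeasureTheory.Integrable.continuous_mul_of_abs_le [TopologicalSpace X]
    [OpensMeasurableSpace X] (hp : Integrable p μ) {g : X → ℝ} (hg : Continuous g) {C : ℝ}
    (hC : ∀ x, |g x| ≤ C) : Integrable (fun x => g x * p x) μ :=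
  hp.bdd_mul hg.aestronglyMeasurable (ae_of_all _ hC)

end Weight

section EvenWeight

variable {p : ℝ → ℝ}

lemma integral_pow_two_mul_mul_nonneg (hp0 : ∀ x, 0 ≤ p x) (k : ℕ) :
    0 ≤ ∫ s, s ^ (2 * k) * p s :=
  integral_nonneg fun s => mul_nonneg ((even_two_mul k).pow_nonneg s) (hp0 s)

lemma integral_pow_mul_eq_zero_of_even (hp : p.Even) {k : ℕ} (hk : Odd k) :
    ∫ s, s ^ k * p s = 0 :=
  integral_eq_zero_of_odd <| Function.Odd.mul_even (fun s => hk.neg_pow s) hp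

lemma integral_sin_mul_eq_zero_of_even (hp : p.Even) (c : ℝ) : ∫ s, sin (c * s) * p s = 0 :=
  integral_eq_zero_of_odd <| Function.Odd.mul_even (fun s => by rw [mul_neg, sin_neg]) hp

lemma integral_cos_sub_mul_of_even (hp : p.Even) (hpi : Integrable p) (c y : ℝ) :
    ∫ s, cos (c * (y - s)) * p s = cos (c * y) * ∫ s, cos (c * s) * p s := by
  have hcos := hpi.continuous_mul_of_abs_le (by fun_prop) fun s => abs_cos_le_one (c * s)
  have hsin := hpi.continuous_mul_of_abs_le (by fun_prop) fun s => abs_sin_le_one (c * s)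
  simp_rw [mul_sub, cos_sub, add_mul, mul_assoc]
  rw [integral_add (hcos.const_mul _) (hsin.const_mul _), integral_const_mul, integral_const_mul,
    integral_sin_mul_eq_zero_of_even hp, mul_zero, add_zero]

lemma sub_pow_mul_eq_sum (y s c : ℝ) (n : ℕ) :
    (y - s) ^ n * c
      = ∑ i ∈ range (n + 1), (-1) ^ (i + n) * y ^ i * n.choose i * (s ^ (n - i) * c) := by
  rw [sub_pow, sum_mul]
  exact sum_congr rfl fun i _ => by ring

variable (hmom : ∀ k : ℕ, Integrable fun s => s ^ k * p s)
include hmom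

lemma integrable_sub_pow_mul (y : ℝ) (n : ℕ) : Integrable fun s => (y - s) ^ n * p s := by
  simp_rw [sub_pow_mul_eq_sum y _ _ n]
  exact integrable_finsetSum _ fun i _ => (hmom (n - i)).const_mul _

lemma integral_sub_pow_mul (y : ℝ) (n : ℕ) :
    ∫ s, (y - s) ^ n * p s
      = ∑ i ∈ range (n + 1), (-1) ^ (i + n) * y ^ i * n.choose i * ∫ s, s ^ (n - i) * p s := by
  simp_rw [sub_pow_mul_eq_sum y _ _ n]
  rw [integral_finsetSum _ fun i _ => (hmom (n - i)).const_mul _]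
  simp_rw [integral_const_mul]

lemma integral_sub_pow_two_mul_mul_of_even (hp : p.Even) (y : ℝ) (j : ℕ) :
    ∫ s, (y - s) ^ (2 * j) * p s = ∑ l ∈ range (j + 1),
      ((2 * j).choose (2 * l) : ℝ) * (∫ s, s ^ (2 * (j - l)) * p s) * y ^ (2 * l) := by
  rw [integral_sub_pow_mul hmom, sum_range_two_mul_add_one_of_odd_eq_zero]
  · refine sum_congr rfl fun l _ => ?_
    rw [Even.neg_one_pow ⟨l + j, by ring⟩, show 2 * j - 2 * l = 2 * (j - l) by omega]
    ring
  · intro i hi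
    rcases le_or_gt i (2 * j) with h | h
    · rw [integral_pow_mul_eq_zero_of_even hp (Nat.Even.sub_odd h (even_two_mul j) hi), mul_zero]
    · rw [Nat.choose_eq_zero_of_lt h, Nat.cast_zero, mul_zero, zero_mul]

end EvenWeight

lemma integral_potential_sub_mul_of_even {p : ℝ → ℝ} (hp : p.Even)
    (hmom : ∀ k : ℕ, Integrable fun s => s ^ k * p s) {β : ℝ → ℝ} (hβ : Continuous β) {C : ℝ}
    (hC : ∀ x, |β x| ≤ C) (a θ : ℕ → ℝ) (n : ℕ) (T : Finset ℕ) (y : ℝ) :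
    ∫ s, ((∑ j ∈ Icc 1 n, a j * (y - s) ^ (2 * j)) + (∑ j ∈ T, a j * cos (θ j * (y - s)))
        + β (y - s)) * p s
      = ∑ k ∈ Icc 1 n, (∫ s, s ^ (2 * k) * p s) * a k
        + ∑ l ∈ Icc 1 n, (∑ k ∈ Icc l n,
            ((2 * k).choose (2 * l) : ℝ) * (∫ s, s ^ (2 * (k - l)) * p s) * a k) * y ^ (2 * l)
        + ∑ j ∈ T, a j * (∫ s, cos (θ j * s) * p s) * cos (θ j * y)
        + ∫ s, β (y - s) * p s := by
  have hpi : Integrable p := by simpa using hmom 0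
  have hpow : ∀ j ∈ Icc 1 n, Integrable fun s => (y - s) ^ (2 * j) * p s :=
    fun j _ => integrable_sub_pow_mul hmom y _
  have hcos : ∀ j ∈ T, Integrable fun s => cos (θ j * (y - s)) * p s :=
    fun j _ => hpi.continuous_mul_of_abs_le (by fun_prop) fun s => abs_cos_le_one _
  have hβp : Integrable fun s => β (y - s) * p s :=
    hpi.continuous_mul_of_abs_le (by fun_prop) fun s => hC (y - s)
  simp_rw [add_mul]
  rw [integral_add _ hβp,
    integral_add (integrable_sum_mul_mul a hpow) (integrable_sum_mul_mul a hcos),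
    integral_sum_mul_mul a hpow, integral_sum_mul_mul a hcos]
  swap
  · exact (integrable_sum_mul_mul a hpow).add (integrable_sum_mul_mul a hcos)
  congr 2
  · simp_rw [integral_sub_pow_two_mul_mul_of_even hmom hp, mul_sum]
    rw [sum_Icc_one_sum_range_succ]
    congr 1
    · exact sum_congr rfl fun k _ => by simp [mul_comm]
    · exact sum_congr rfl fun l _ => by rw [sum_mul]; exact sum_congr rfl fun k _ => by ring
  · exact sum_congr rfl fun j _ => by rw [integral_cos_sub_mul_of_even hp hpi]; ring

theorem invariant_density_lower_bound_general
    (J₁ J : ℕ)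
    (θ : ℕ → ℝ)
    (a : ℕ → ℝ) (ha : ∀ k ∈ Finset.Icc 1 J₁, 0 ≤ a k)
    (β β' : ℝ → ℝ)
    (hβd : ∀ y, HasDerivAt β (β' y) y)
    (hβbd : ∃ C, ∀ y, |β y| ≤ C)
    (φ : ℝ → ℝ)
    (hφ : ∀ y, φ y = (∑ j ∈ Finset.Icc 1 J₁, a j * y ^ (2*j))
        + (∑ j ∈ Finset.Icc (J₁+1) J, a j * Real.cos (θ j * y)) + β y)
    (p : ℝ → ℝ) (hpnonneg : ∀ y, 0 ≤ p y)
    (hpint : ∫ y, p y = 1) (hpeven : ∀ y, p (-y) = p y)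
    (hmom : ∀ k : ℕ, Integrable (fun y => y ^ k * p y))
    (Z : ℝ)
    (hfix : ∀ y, p y = Z⁻¹ * Real.exp (-∫ s, φ (y - s) * p s))
    (m : ℕ → ℝ) (hm : ∀ k, m k = ∫ y, y ^ k * p y)
    (α : ℕ → ℝ)
    (hα₁ : ∀ j ∈ Finset.Icc 1 J₁,
      α j = ∑ k ∈ Finset.Icc j J₁, (Nat.choose (2*k) (2*j) : ℝ) * m (2*(k-j)) * a k)
    (hα₂ : ∀ j ∈ Finset.Icc (J₁+1) J, α j = a j * ∫ x, Real.cos (θ j * x) * p x)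
    (α₀ : ℝ) (hα₀ : α₀ = ∑ k ∈ Finset.Icc 1 J₁, m (2*k) * a k)
    (ᾱ₁ : ℝ) (hᾱ₁ : ᾱ₁ = ∑ j ∈ Finset.Icc 1 J₁, α j)
    (Bβ : ℝ) (hBβ : Bβ = ⨆ y : ℝ, |β y|)
    (δ₀ : ℝ)
    (hδ₀ : δ₀ = (2 * Z)⁻¹
      * Real.exp (-α₀ - (∑ j ∈ Finset.Icc (J₁+1) J, |α j|) - Bβ)) :
    ∀ U : ℝ, 1 ≤ U → ∀ y : ℝ, |y| ≤ U →
      2 * δ₀ * Real.exp (-ᾱ₁ * U ^ (2 * J₁)) ≤ p y := by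
  intro U hU y hy
  obtain ⟨C, hC⟩ := hβbd
  have hβc : Continuous β := continuous_iff_continuousAt.2 fun x => (hβd x).continuousAt
  have hβ_sup (x : ℝ) : |β x| ≤ Bβ := hBβ ▸ le_ciSup ⟨C, by rintro _ ⟨z, rfl⟩; exact hC z⟩ x
  have hα_nonneg : ∀ l ∈ Icc 1 J₁, 0 ≤ α l := fun l hl => by
    rw [hα₁ l hl]
    refine sum_nonneg fun k hk => mul_nonneg (mul_nonneg (Nat.cast_nonneg _) ?_) (ha k ?_)
    · exact hm _ ▸ integral_pow_two_mul_mul_nonneg hpnonneg _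
    · simp only [mem_Icc] at hl hk ⊢; omega
  set K := α₀ + ᾱ₁ * U ^ (2 * J₁) + ∑ j ∈ Icc (J₁ + 1) J, |α j| + Bβ
  have hconv : ∫ s, φ (y - s) * p s ≤ K := calc
    ∫ s, φ (y - s) * p s = α₀ + ∑ l ∈ Icc 1 J₁, α l * y ^ (2 * l)
        + ∑ j ∈ Icc (J₁ + 1) J, α j * cos (θ j * y) + ∫ s, β (y - s) * p s := by
      simp_rw [hφ]
      rw [integral_potential_sub_mul_of_even hpeven hmom hβc hC, hα₀]
      simp only [← hm]
      congr 2
      · exact congrArg _ (sum_congr rfl fun l hl => by rw [hα₁ l hl])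
      · exact sum_congr rfl fun j hj => by rw [hα₂ j hj]
    _ ≤ K := add_le_add (add_le_add (add_le_add le_rfl
          (hᾱ₁ ▸ sum_mul_pow_two_mul_le hα_nonneg hU hy))
          (sum_le_sum fun j _ => mul_cos_le_abs _ _))
          (integral_mul_le_of_abs_le hpnonneg hpint (by fun_prop) fun s => hβ_sup (y - s))
  calc 2 * δ₀ * exp (-ᾱ₁ * U ^ (2 * J₁)) = p y * exp ((∫ s, φ (y - s) * p s) - K) := by
        rw [hfix y, mul_assoc Z⁻¹, ← exp_add, hδ₀, mul_inv,
          show -(∫ s, φ (y - s) * p s) + ((∫ s, φ (y - s) * p s) - K)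
            = (-α₀ - ∑ j ∈ Icc (J₁ + 1) J, |α j| - Bβ) + -ᾱ₁ * U ^ (2 * J₁) by ring, exp_add]
        ring
    _ ≤ p y := mul_le_of_le_one_right (hpnonneg y) (exp_le_one_iff.2 (sub_nonpos.2 hconv))

theorem invariant_density_lower_bound
    (J₁ J : ℕ) (hJ₁ : 1 ≤ J₁) (hJ : J₁ ≤ J)
    (θ : ℕ → ℝ) (hθpos : ∀ j ∈ Finset.Icc (J₁+1) J, 0 < θ j)
    (hθdist : ∀ i ∈ Finset.Icc (J₁+1) J, ∀ j ∈ Finset.Icc (J₁+1) J, i ≠ j → θ i ≠ θ j)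
    (a : ℕ → ℝ) (ha : ∀ k ∈ Finset.Icc 1 J₁, 0 ≤ a k)
    (β β' β'' : ℝ → ℝ)
    (hβd : ∀ y, HasDerivAt β (β' y) y)
    (hβd2 : ∀ y, HasDerivAt β' (β'' y) y)
    (hβ''cont : Continuous β'')
    (hβeven : ∀ y, β (-y) = β y)
    (hβbd : ∃ C, ∀ y, |β y| ≤ C) (hβ'bd : ∃ C, ∀ y, |β' y| ≤ C)
    (hβ''bd : ∃ C, ∀ y, |β'' y| ≤ C)
    (hβ'L1 : Integrable β')
    (φ : ℝ → ℝ)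
    (hφ : ∀ y, φ y = (∑ j ∈ Finset.Icc 1 J₁, a j * y ^ (2*j))
        + (∑ j ∈ Finset.Icc (J₁+1) J, a j * Real.cos (θ j * y)) + β y)
    (p : ℝ → ℝ) (hpmeas : Measurable p) (hpnonneg : ∀ y, 0 ≤ p y)
    (hpint : ∫ y, p y = 1) (hpeven : ∀ y, p (-y) = p y)
    (hmom : ∀ k : ℕ, Integrable (fun y => y ^ k * p y))
    (Z : ℝ) (hZ : Z = ∫ x, Real.exp (-∫ s, φ (x - s) * p s))
    (hfix : ∀ y, p y = Z⁻¹ * Real.exp (-∫ s, φ (y - s) * p s))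
    (m : ℕ → ℝ) (hm : ∀ k, m k = ∫ y, y ^ k * p y)
    (α : ℕ → ℝ)
    (hα₁ : ∀ j ∈ Finset.Icc 1 J₁,
      α j = ∑ k ∈ Finset.Icc j J₁, (Nat.choose (2*k) (2*j) : ℝ) * m (2*(k-j)) * a k)
    (hα₂ : ∀ j ∈ Finset.Icc (J₁+1) J, α j = a j * ∫ x, Real.cos (θ j * x) * p x)
    (α₀ : ℝ) (hα₀ : α₀ = ∑ k ∈ Finset.Icc 1 J₁, m (2*k) * a k)
    (ᾱ₁ : ℝ) (hᾱ₁ : ᾱ₁ = ∑ j ∈ Finset.Icc 1 J₁, α j)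
    (Bβ : ℝ) (hBβ : Bβ = ⨆ y : ℝ, |β y|)
    (δ₀ : ℝ)
    (hδ₀ : δ₀ = (2 * Z)⁻¹
      * Real.exp (-α₀ - (∑ j ∈ Finset.Icc (J₁+1) J, |α j|) - Bβ)) :
    ∀ U : ℝ, 1 ≤ U → ∀ y : ℝ, |y| ≤ U →
      2 * δ₀ * Real.exp (-ᾱ₁ * U ^ (2 * J₁)) ≤ p y :=
  invariant_density_lower_bound_general J₁ J θ a ha β β' hβd hβbd φ hφ p hpnonneg hpint hpeven hmom
    Z hfix m hm α hα₁ hα₂ α₀ hα₀ ᾱ₁ hᾱ₁ Bβ hBβ δ₀ hδ₀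
end
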